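/- Let U be a connected open subset of {(u¹,u²,u³) ∈ ℝ³ : u¹,u²,u³ pairwise distinct} and let β : U → ℝ be a C¹ function satisfying ∂₁β + ∂₂β + ∂₃β = 0 and u¹∂₁β + u²∂₂β + u³∂₃β = −β on U. Then every point of U has an open neighborhood V ⊆ U on which β(u¹,u²,u³) = F((u³−u¹)/(u²−u¹))/(u²−u¹) for some C¹ function F of one real variable; conversely, every function of this form on such a domain satisfies both equations. -/

import Mathlib

/-- Partial derivative of `g : ℝ³ → ℝ` with respect to the `i`-th coordinate. -/
noncomputable def pd3 (g : (Fin 3 → ℝ) → ℝ) (i : Fin 3) (u : Fin 3 → ℝ) : ℝ :=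
  deriv (fun t => g (Function.update u i t)) (u i)

/-!
At a point `z` with `z 1 ≠ z 0`, the fields `e` and `E` point along `(1, 1, 1)` and `z`, which
span the plane `{v | v 2 - v 0 = x * (v 1 - v 0)}` with `x = (z 2 - z 0) / (z 1 - z 0)`. The
function `Φ u = (u 1 - u 0) * β u` is killed by `e` and by `E` (it is homogeneous of degree `0`),
so it is constant along every segment lying in one of these planes, and near `p` it depends only
on `x`. Then `F x` is `Φ` at the point with ratio `x` on a fixed line through `p`, multiplied by a
bump function so that it is `C¹` on all of `ℝ`. Conversely, `F x / (u 1 - u 0)` is invariant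
under translation along `(1, 1, 1)` and homogeneous of degree `-1`, and differentiating these two
identities gives the two equations.
-/

open Filter Topology Set

section Calculus

variable {E F : Type*} [NormedAddCommGroup E] [NormedSpace ℝ E]
  [NormedAddCommGroup F] [NormedSpace ℝ F]

theorem ContDiffAt.exists_contDiff_eventuallyEq [HasContDiffBump E] {g : E → F} {x : E}
    {n : ℕ} (hg : ContDiffAt ℝ n g x) : ∃ G : E → F, ContDiff ℝ n G ∧ G =ᶠ[𝓝 x] g := by
  obtain ⟨r, hr, hball⟩ := Metric.eventually_nhds_iff_ball.1 (hg.eventually (by simp))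
  let φ : ContDiffBump x := ⟨r / 3, 2 * r / 3, by positivity, by linarith⟩
  refine ⟨fun y => φ y • g y, contDiff_iff_contDiffAt.2 fun y => ?_, ?_⟩
  · by_cases hy : y ∈ Metric.ball x r
    · exact φ.contDiff.contDiffAt.smul (hball y hy)
    · have hy' : y ∉ tsupport φ := by
        rw [φ.tsupport_eq]
        exact fun hy' => hy (Metric.closedBall_subset_ball (by show 2 * r / 3 < r; linarith) hy')
      refine contDiffAt_const (c := (0 : F)).congr_of_eventuallyEq ?_
      filter_upwards [notMem_tsupport_iff_eventuallyEq.1 hy'] with z hz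
      simp [hz]
  · filter_upwards [Metric.closedBall_mem_nhds x φ.rIn_pos] with y hy
    simp [φ.one_of_mem_closedBall hy]

theorem eq_of_hasFDerivAt_apply_sub_eq_zero {f : E → ℝ} {f' : E → E →L[ℝ] ℝ} {a b : E}
    (hf : ∀ z ∈ segment ℝ a b, HasFDerivAt f (f' z) z)
    (h : ∀ z ∈ segment ℝ a b, f' z (b - a) = 0) : f a = f b := by
  have hmem : ∀ t ∈ Icc (0 : ℝ) 1, a + t • (b - a) ∈ segment ℝ a b := fun t ht =>
    segment_eq_image' ℝ a b ▸ mem_image_of_mem _ ht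
  have hderiv : ∀ t ∈ Icc (0 : ℝ) 1,
      HasDerivAt (fun t : ℝ => f (a + t • (b - a))) 0 t := fun t ht => by
    have hline : HasDerivAt (fun t : ℝ => a + t • (b - a)) (b - a) t := by
      simpa using ((hasDerivAt_id t).smul_const (b - a)).const_add a
    have := (hf _ (hmem t ht)).comp_hasDerivAt t hline
    rwa [h _ (hmem t ht)] at this
  obtain ⟨c, -, hslope⟩ := exists_hasDerivAt_eq_slope _ _ zero_lt_one
    (fun t ht => (hderiv t ht).continuousAt.continuousWithinAt)
    (fun t ht => hderiv t (Ioo_subset_Icc_self ht))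
  simpa [sub_eq_zero, eq_comm] using hslope

theorem fderiv_apply_eq_zero_of_forall_add_smul_eq {g : E → ℝ} {u w : E}
    (hg : DifferentiableAt ℝ g u) (h : ∀ t : ℝ, g (u + t • w) = g u) :
    fderiv ℝ g u w = 0 := by
  have hline : HasDerivAt (fun t : ℝ => u + t • w) w 0 := by
    simpa using ((hasDerivAt_id (0 : ℝ)).smul_const w).const_add u
  have hcomp := hg.hasFDerivAt.comp_hasDerivAt_of_eq 0 hline (by simp)
  simp only [Function.comp_def, h] at hcomp
  exact hcomp.unique (hasDerivAt_const _ _)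

theorem fderiv_apply_self_eq_neg_of_homogeneous {g : E → ℝ} {u : E}
    (hg : DifferentiableAt ℝ g u) (h : ∀ t > (0 : ℝ), g (t • u) = t⁻¹ * g u) :
    fderiv ℝ g u u = -g u := by
  have hray : HasDerivAt (fun t : ℝ => t • u) u 1 := by
    simpa using (hasDerivAt_id (1 : ℝ)).smul_const u
  have hhom : HasDerivAt (fun t : ℝ => t⁻¹ * g u) (-g u) 1 := by
    simpa using (hasDerivAt_inv one_ne_zero).mul_const (g u)
  exact (hg.hasFDerivAt.comp_hasDerivAt_of_eq 1 hray (by simp)).unique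
    (hhom.congr_of_eventuallyEq (by filter_upwards [lt_mem_nhds one_pos] with t ht using h t ht))

end Calculus

theorem LinearMap.smul_apply_eq_smul_apply_of_ratio_eq {M : Type*} [AddCommGroup M]
    [Module ℝ M] (L : (Fin 3 → ℝ) →ₗ[ℝ] M) (hL : L 1 = 0) {v z : Fin 3 → ℝ} {x : ℝ}
    (hv : v 2 - v 0 = x * (v 1 - v 0)) (hz : z 2 - z 0 = x * (z 1 - z 0)) :
    (z 1 - z 0) • L v = (v 1 - v 0) • L z := by
  have hdecomp :
      (z 1 - z 0) • v = (v 1 - v 0) • z + (v 0 * (z 1 - z 0) - z 0 * (v 1 - v 0)) • 1 := by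
    ext i
    fin_cases i
    · simp; ring
    · simp; ring
    · simp; linear_combination (z 1 - z 0) * hv - (v 1 - v 0) * hz
  rw [← map_smul, hdecomp, map_add, map_smul, map_smul, hL, smul_zero, add_zero]

section PartialDerivatives

variable {g : (Fin 3 → ℝ) → ℝ} {u : Fin 3 → ℝ}

theorem pd3_eq_fderiv (hg : DifferentiableAt ℝ g u) (i : Fin 3) :
    pd3 g i u = fderiv ℝ g u (Pi.single i 1) :=
  (hg.hasFDerivAt.comp_hasDerivAt_of_eq (u i) (hasDerivAt_update u i (u i)) (by simp)).deriv

theorem fderiv_apply_eq_sum_pd3 (hg : DifferentiableAt ℝ g u) (w : Fin 3 → ℝ) :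
    fderiv ℝ g u w = w 0 * pd3 g 0 u + w 1 * pd3 g 1 u + w 2 * pd3 g 2 u := by
  have hw : w = w 0 • Pi.single 0 1 + w 1 • Pi.single 1 1 + w 2 • Pi.single 2 1 := by
    ext i; fin_cases i <;> simp
  simp only [pd3_eq_fderiv hg]
  conv_lhs => rw [hw]
  simp only [map_add, map_smul, smul_eq_mul]

theorem sum_pd3_eq_fderiv_one (hg : DifferentiableAt ℝ g u) :
    pd3 g 0 u + pd3 g 1 u + pd3 g 2 u = fderiv ℝ g u 1 := by
  simp [fderiv_apply_eq_sum_pd3 hg]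

end PartialDerivatives

noncomputable def simpleRatio (u : Fin 3 → ℝ) : ℝ := (u 2 - u 0) / (u 1 - u 0)

theorem differentiableAt_simpleRatio {u : Fin 3 → ℝ} (hu : u 1 ≠ u 0) :
    DifferentiableAt ℝ simpleRatio u := by
  unfold simpleRatio
  fun_prop (disch := exact sub_ne_zero.2 hu)

theorem simpleRatio_add_smul_one (u : Fin 3 → ℝ) (t : ℝ) :
    simpleRatio (u + t • 1) = simpleRatio u := by
  simp [simpleRatio]

theorem simpleRatio_smul (u : Fin 3 → ℝ) {t : ℝ} (ht : t ≠ 0) :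
    simpleRatio (t • u) = simpleRatio u := by
  simp only [simpleRatio, Pi.smul_apply, smul_eq_mul, ← mul_sub, mul_div_mul_left _ _ ht]

noncomputable def profileFunction (F : ℝ → ℝ) (u : Fin 3 → ℝ) : ℝ :=
  F (simpleRatio u) / (u 1 - u 0)

section Profile

variable {F : ℝ → ℝ} {u : Fin 3 → ℝ}

theorem differentiableAt_profileFunction (hF : DifferentiableAt ℝ F (simpleRatio u))
    (hu : u 1 ≠ u 0) : DifferentiableAt ℝ (profileFunction F) u := by
  unfold profileFunction
  simp only [div_eq_mul_inv]
  exact (hF.comp u (differentiableAt_simpleRatio hu)).mul (.inv (by fun_prop) (sub_ne_zero.2 hu))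

theorem fderiv_profileFunction_apply_one (hF : DifferentiableAt ℝ F (simpleRatio u))
    (hu : u 1 ≠ u 0) : fderiv ℝ (profileFunction F) u 1 = 0 :=
  fderiv_apply_eq_zero_of_forall_add_smul_eq (differentiableAt_profileFunction hF hu)
    fun t => by simp [profileFunction, simpleRatio_add_smul_one]

theorem fderiv_profileFunction_apply_self (hF : DifferentiableAt ℝ F (simpleRatio u))
    (hu : u 1 ≠ u 0) : fderiv ℝ (profileFunction F) u u = -profileFunction F u :=
  fderiv_apply_self_eq_neg_of_homogeneous (differentiableAt_profileFunction hF hu)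
    fun t ht => by
      simp only [profileFunction, simpleRatio_smul u ht.ne', Pi.smul_apply, smul_eq_mul,
        ← mul_sub]
      field_simp

end Profile

section Invariant

variable {U : Set (Fin 3 → ℝ)} {β : (Fin 3 → ℝ) → ℝ}

theorem sub_mul_eq_of_segment_subset (hβ : ∀ z ∈ U, DifferentiableAt ℝ β z)
    (he : ∀ z ∈ U, fderiv ℝ β z 1 = 0) (hE : ∀ z ∈ U, fderiv ℝ β z z = -β z)
    {u q : Fin 3 → ℝ} {x : ℝ} (hseg : segment ℝ u q ⊆ U)
    (hu : u 2 - u 0 = x * (u 1 - u 0)) (hq : q 2 - q 0 = x * (q 1 - q 0)) :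
    (u 1 - u 0) * β u = (q 1 - q 0) * β q := by
  refine eq_of_hasFDerivAt_apply_sub_eq_zero (f := fun v => (v 1 - v 0) * β v)
    (f' := fun z => (z 1 - z 0) • fderiv ℝ β z + β z • (.proj 1 - .proj 0))
    (fun z hz => ?_) (fun z hz => ?_)
  · exact (((hasFDerivAt_apply 1 z).sub (hasFDerivAt_apply 0 z)).mul
      (hβ z (hseg hz)).hasFDerivAt).congr_fderiv (by ext; simp [add_comm])
  · have hz_plane : z 2 - z 0 = x * (z 1 - z 0) := by
      obtain ⟨a, b, -, -, -, rfl⟩ := hz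
      simp only [Pi.add_apply, Pi.smul_apply, smul_eq_mul]
      linear_combination a * hu + b * hq
    have hv_plane : (q - u) 2 - (q - u) 0 = x * ((q - u) 1 - (q - u) 0) := by
      simp only [Pi.sub_apply]
      linear_combination hq - hu
    have key := (fderiv ℝ β z).toLinearMap.smul_apply_eq_smul_apply_of_ratio_eq
      (he z (hseg hz)) hv_plane hz_plane
    simp only [ContinuousLinearMap.coe_coe, hE z (hseg hz), smul_eq_mul] at key
    simp only [add_apply, smul_apply, sub_apply, ContinuousLinearMap.proj_apply, smul_eq_mul]
    linear_combination key

theorem exists_contDiff_eventually_eq_profileFunction (hU : IsOpen U)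
    (hβ : ContDiffOn ℝ 1 β U) (he : ∀ z ∈ U, fderiv ℝ β z 1 = 0)
    (hE : ∀ z ∈ U, fderiv ℝ β z z = -β z) {p : Fin 3 → ℝ} (hp : p ∈ U) (hp01 : p 1 ≠ p 0) :
    ∃ F : ℝ → ℝ, ContDiff ℝ 1 F ∧ ∀ᶠ u in 𝓝 p, β u = profileFunction F u := by
  let q : ℝ → Fin 3 → ℝ := fun x => ![p 0, p 1, p 0 + x * (p 1 - p 0)]
  have hq : ContDiff ℝ 1 q := contDiff_pi.2 fun i => by fin_cases i <;> simp [q] <;> fun_prop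
  have hq_plane (x : ℝ) : q x 2 - q x 0 = x * (q x 1 - q x 0) := by simp [q]
  have hqp : q (simpleRatio p) = p := by
    ext i
    fin_cases i
    · simp [q]
    · simp [q]
    · simp [q, simpleRatio, div_mul_cancel₀ _ (sub_ne_zero.2 hp01)]
  have hΦq : ContDiffAt ℝ 1 (fun x => (q x 1 - q x 0) * β (q x)) (simpleRatio p) := by
    have hβp : ContDiffAt ℝ 1 β (q (simpleRatio p)) := by
      rw [hqp]; exact hβ.contDiffAt (hU.mem_nhds hp)
    exact .mul (by fun_prop) (hβp.comp _ hq.contDiffAt)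
  obtain ⟨F, hF, hFq⟩ := hΦq.exists_contDiff_eventuallyEq
  obtain ⟨r, hr, hrU⟩ := Metric.isOpen_iff.1 hU p hp
  have hratio : ContinuousAt simpleRatio p := (differentiableAt_simpleRatio hp01).continuousAt
  have hqr : Tendsto (q ∘ simpleRatio) (𝓝 p) (𝓝 p) := by
    simpa only [hqp] using (hq.continuous.tendsto _).comp hratio
  refine ⟨F, hF, ?_⟩
  filter_upwards [Metric.ball_mem_nhds p hr, hratio.eventually hFq,
    hqr (Metric.ball_mem_nhds p hr),
    (by fun_prop : ContinuousAt (fun u : Fin 3 → ℝ => u 1 - u 0) p).eventually_ne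
      (sub_ne_zero.2 hp01)] with u hu hFu hqu hu01
  have hu_plane : u 2 - u 0 = simpleRatio u * (u 1 - u 0) := by
    rw [simpleRatio, div_mul_cancel₀ _ hu01]
  have hseg : segment ℝ u (q (simpleRatio u)) ⊆ U :=
    ((convex_ball p r).segment_subset hu hqu).trans hrU
  have hβU : ∀ z ∈ U, DifferentiableAt ℝ β z := fun z hz =>
    (hβ.differentiableOn one_ne_zero z hz).differentiableAt (hU.mem_nhds hz)
  rw [profileFunction, hFu, eq_div_iff hu01,
    ← sub_mul_eq_of_segment_subset hβU he hE hseg hu_plane (hq_plane _)]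
  ring

end Invariant

theorem stmt_0 :
    (∀ (U : Set (Fin 3 → ℝ)) (β : (Fin 3 → ℝ) → ℝ),
      IsOpen U → IsConnected U →
      (∀ u ∈ U, u 0 ≠ u 1 ∧ u 0 ≠ u 2 ∧ u 1 ≠ u 2) →
      ContDiffOn ℝ 1 β U →
      (∀ u ∈ U, pd3 β 0 u + pd3 β 1 u + pd3 β 2 u = 0) →
      (∀ u ∈ U, u 0 * pd3 β 0 u + u 1 * pd3 β 1 u + u 2 * pd3 β 2 u = -β u) →
      ∀ p ∈ U, ∃ V : Set (Fin 3 → ℝ), IsOpen V ∧ p ∈ V ∧ V ⊆ U ∧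
        ∃ F : ℝ → ℝ, ContDiff ℝ 1 F ∧
          ∀ u ∈ V, β u = F ((u 2 - u 0) / (u 1 - u 0)) / (u 1 - u 0))
    ∧
    (∀ (U : Set (Fin 3 → ℝ)) (F : ℝ → ℝ),
      IsOpen U → IsConnected U →
      (∀ u ∈ U, u 0 ≠ u 1 ∧ u 0 ≠ u 2 ∧ u 1 ≠ u 2) →
      ContDiff ℝ 1 F →
      ∀ u ∈ U,
        (pd3 (fun v => F ((v 2 - v 0) / (v 1 - v 0)) / (v 1 - v 0)) 0 u
          + pd3 (fun v => F ((v 2 - v 0) / (v 1 - v 0)) / (v 1 - v 0)) 1 u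
          + pd3 (fun v => F ((v 2 - v 0) / (v 1 - v 0)) / (v 1 - v 0)) 2 u = 0) ∧
        (u 0 * pd3 (fun v => F ((v 2 - v 0) / (v 1 - v 0)) / (v 1 - v 0)) 0 u
          + u 1 * pd3 (fun v => F ((v 2 - v 0) / (v 1 - v 0)) / (v 1 - v 0)) 1 u
          + u 2 * pd3 (fun v => F ((v 2 - v 0) / (v 1 - v 0)) / (v 1 - v 0)) 2 u
          = -(F ((u 2 - u 0) / (u 1 - u 0)) / (u 1 - u 0)))) := by
  refine ⟨fun U β hU _ hdist hβ he hE p hp => ?_, fun U F _ _ hdist hF u hu => ?_⟩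
  · have hβU : ∀ u ∈ U, DifferentiableAt ℝ β u := fun u hu =>
      (hβ.differentiableOn one_ne_zero u hu).differentiableAt (hU.mem_nhds hu)
    obtain ⟨F, hF, hβF⟩ := exists_contDiff_eventually_eq_profileFunction hU hβ
      (fun u hu => (sum_pd3_eq_fderiv_one (hβU u hu)).symm.trans (he u hu))
      (fun u hu => (fderiv_apply_eq_sum_pd3 (hβU u hu) u).trans (hE u hu)) hp (hdist p hp).1.symm
    obtain ⟨V, hV, hVo, hpV⟩ := eventually_nhds_iff.1 (hβF.and (hU.mem_nhds hp))
    exact ⟨V, hVo, hpV, fun u hu => (hV u hu).2, F, hF, fun u hu => (hV u hu).1⟩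
  · have hu01 := (hdist u hu).1.symm
    have hFu := hF.differentiable one_ne_zero (simpleRatio u)
    have hGu := differentiableAt_profileFunction hFu hu01
    exact ⟨(sum_pd3_eq_fderiv_one hGu).trans (fderiv_profileFunction_apply_one hFu hu01),
      (fderiv_apply_eq_sum_pd3 hGu u).symm.trans (fderiv_profileFunction_apply_self hFu hu01)⟩
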